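/- arXiv:1911.07676 — 4 statements merged into one kernel-verified Lean document; each statement's English description precedes it below -/
import Mathlib

section
/- Let Φ ∈ R^{k×d} have rows spanning R^d, let ρ be a probability distribution on the rows of Φ with G(ρ) = Σ_a ρ(a) a aᵀ invertible and g(ρ) = max_a aᵀ G(ρ)^{-1} a ≤ 2d. Suppose μ ∈ R^k satisfies μ = Φθ + Δ with ‖Δ‖∞ ≤ ε, and η ∈ R^k satisfies ‖η‖∞ ≤ β. Define θ̂ = G(ρ)^{-1} Σ_a ρ(a)(μ_a + η_a) a. Then ‖Φθ̂ - μ‖∞ ≤ ε + (ε + β)√(2d). -/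
open Matrix Finset

/-- Least-squares extrapolation bound under a near-optimal design: if the design
`ρ` satisfies `g(ρ) ≤ 2d`, the reward `μ = Φθ + Δ` with `‖Δ‖∞ ≤ ε`, and the
observation noise `η` satisfies `‖η‖∞ ≤ β`, then the least-squares estimate
`θ̂ = G(ρ)⁻¹ ∑_a ρ(a)(μ_a + η_a) a` satisfies `‖Φθ̂ − μ‖∞ ≤ ε + (ε+β)√(2d)`. -/
theorem stmt2 (k d : ℕ) (ε β : ℝ) (Φ : Matrix (Fin k) (Fin d) ℝ)
    (hspan : Submodule.span ℝ (Set.range fun i => Φ i) = ⊤)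
    (ρ : Fin k → ℝ) (hρ0 : ∀ i, 0 ≤ ρ i) (hρ1 : ∑ i, ρ i = 1)
    (G : Matrix (Fin d) (Fin d) ℝ)
    (hG : G = ∑ i, ρ i • vecMulVec (Φ i) (Φ i))
    (hGinv : IsUnit G.det)
    (hg : ∀ i, Φ i ⬝ᵥ G⁻¹.mulVec (Φ i) ≤ 2 * d)
    (μ : Fin k → ℝ) (θ : Fin d → ℝ) (Δ : Fin k → ℝ)
    (hμ : μ = Φ.mulVec θ + Δ) (hΔ : ∀ j, |Δ j| ≤ ε)
    (η : Fin k → ℝ) (hη : ∀ j, |η j| ≤ β)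
    (θhat : Fin d → ℝ)
    (hθhat : θhat = G⁻¹.mulVec (∑ i, (ρ i * (μ i + η i)) • Φ i)) :
    ∀ j, |Φ.mulVec θhat j - μ j| ≤ ε + (ε + β) * Real.sqrt (2 * d) := by
  have dot_sum : ∀ {n : ℕ} (v : Fin n → ℝ) (x : Fin k → Fin n → ℝ),
      v ⬝ᵥ (∑ i, x i) = ∑ i, v ⬝ᵥ x i := by
    intro n v x
    simp only [dotProduct, Finset.sum_apply, Finset.mul_sum]
    rw [Finset.sum_comm]
  have aux : ∀ v w : Fin d → ℝ, v ⬝ᵥ G.mulVec w = ∑ i, ρ i * ((v ⬝ᵥ Φ i) * (Φ i ⬝ᵥ w)) := by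
    intro v w
    have hMw : G.mulVec w = ∑ i, (ρ i * (Φ i ⬝ᵥ w)) • Φ i := by
      ext b
      rw [hG]
      simp only [Matrix.mulVec, dotProduct, Matrix.sum_apply, Matrix.smul_apply,
        Matrix.vecMulVec_apply, smul_eq_mul, Finset.sum_mul, Finset.mul_sum,
        Finset.sum_apply, Pi.smul_apply]
      rw [Finset.sum_comm]
      refine Finset.sum_congr rfl fun i _ => Finset.sum_congr rfl fun x _ => ?_
      ring
    rw [hMw, dot_sum]
    refine Finset.sum_congr rfl fun i _ => ?_
    rw [dotProduct_smul]
    simp only [smul_eq_mul]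
    ring
  intro j
  have hsymm : Gᵀ = G := by
    rw [hG]
    ext a b
    simp only [Matrix.transpose_apply, Matrix.sum_apply, Matrix.smul_apply,
      Matrix.vecMulVec_apply, smul_eq_mul]
    exact Finset.sum_congr rfl fun i _ => by ring
  have hinvsymm : (G⁻¹)ᵀ = G⁻¹ := by
    rw [Matrix.transpose_nonsing_inv, hsymm]
  set u : Fin d → ℝ := G⁻¹.mulVec (Φ j) with hu
  have hc : ∀ i, Φ j ⬝ᵥ G⁻¹.mulVec (Φ i) = u ⬝ᵥ Φ i := by
    intro i
    rw [Matrix.dotProduct_mulVec, ← Matrix.mulVec_transpose, hinvsymm]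
  set c : Fin k → ℝ := fun i => u ⬝ᵥ Φ i with hcdef
  have hGu : G.mulVec u = Φ j := by
    rw [hu, Matrix.mulVec_mulVec, Matrix.mul_nonsing_inv G hGinv, Matrix.one_mulVec]
  have hsum_sq : ∑ i, ρ i * c i ^ 2 = c j := by
    have h1 : u ⬝ᵥ G.mulVec u = ∑ i, ρ i * c i ^ 2 := by
      rw [aux]
      refine Finset.sum_congr rfl fun i _ => ?_
      rw [dotProduct_comm (Φ i) u]
      simp only [hcdef]
      try ring
    rw [← h1, hGu]
  have hcj : c j ≤ 2 * d := by
    have := hg j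
    rwa [hc j] at this
  have hmain : Φ.mulVec θhat j = Φ j ⬝ᵥ θ + ∑ i, ρ i * (Δ i + η i) * c i := by
    have h0 : Φ.mulVec θhat j = ∑ i, ρ i * (μ i + η i) * c i := by
      show Φ j ⬝ᵥ θhat = _
      rw [hθhat]
      have hsplit : G⁻¹.mulVec (∑ i, (ρ i * (μ i + η i)) • Φ i)
          = ∑ i, G⁻¹.mulVec ((ρ i * (μ i + η i)) • Φ i) := by
        ext b
        simp only [Matrix.mulVec, dotProduct, Finset.sum_apply, Pi.smul_apply,
          smul_eq_mul, Finset.mul_sum]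
        rw [Finset.sum_comm]
      rw [hsplit, dot_sum]
      refine Finset.sum_congr rfl fun i _ => ?_
      rw [Matrix.mulVec_smul, dotProduct_smul, hc i]
      simp only [smul_eq_mul, hcdef]
    have h1 : ∑ i, ρ i * (Φ i ⬝ᵥ θ) * c i = Φ j ⬝ᵥ θ := by
      have h2 : u ⬝ᵥ G.mulVec θ = ∑ i, ρ i * (Φ i ⬝ᵥ θ) * c i := by
        rw [aux]
        refine Finset.sum_congr rfl fun i _ => ?_
        rw [dotProduct_comm u (Φ i)]
        simp only [hcdef]
        rw [dotProduct_comm (Φ i) u]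
        ring
      rw [← h2, Matrix.dotProduct_mulVec, ← Matrix.mulVec_transpose, hsymm, hGu]
    rw [h0, ← h1, ← Finset.sum_add_distrib]
    refine Finset.sum_congr rfl fun i _ => ?_
    have hμi : μ i = Φ i ⬝ᵥ θ + Δ i := by rw [hμ]; rfl
    rw [hμi]
    ring
  have hμj : μ j = Φ j ⬝ᵥ θ + Δ j := by rw [hμ]; rfl
  have hεβ : 0 ≤ ε + β := add_nonneg ((abs_nonneg _).trans (hΔ j)) ((abs_nonneg _).trans (hη j))
  have hCS : ∑ i, ρ i * |c i| ≤ Real.sqrt (2 * d) := by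
    have hnn : 0 ≤ ∑ i, ρ i * |c i| :=
      Finset.sum_nonneg fun i _ => mul_nonneg (hρ0 i) (abs_nonneg _)
    rw [Real.le_sqrt hnn (by positivity)]
    calc (∑ i, ρ i * |c i|) ^ 2
        = (∑ i, Real.sqrt (ρ i) * (Real.sqrt (ρ i) * |c i|)) ^ 2 := by
          congr 1
          refine Finset.sum_congr rfl fun i _ => ?_
          rw [← mul_assoc, Real.mul_self_sqrt (hρ0 i)]
      _ ≤ (∑ i, Real.sqrt (ρ i) ^ 2) * ∑ i, (Real.sqrt (ρ i) * |c i|) ^ 2 :=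
          Finset.sum_mul_sq_le_sq_mul_sq _ _ _
      _ = (∑ i, ρ i) * ∑ i, ρ i * c i ^ 2 := by
          congr 1
          · exact Finset.sum_congr rfl fun i _ => Real.sq_sqrt (hρ0 i)
          · refine Finset.sum_congr rfl fun i _ => ?_
            rw [mul_pow, Real.sq_sqrt (hρ0 i), sq_abs]
      _ = c j := by rw [hρ1, one_mul, hsum_sq]
      _ ≤ 2 * d := hcj
  have hS : |∑ i, ρ i * (Δ i + η i) * c i| ≤ (ε + β) * Real.sqrt (2 * d) := by
    calc |∑ i, ρ i * (Δ i + η i) * c i| ≤ ∑ i, |ρ i * (Δ i + η i) * c i| :=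
          Finset.abs_sum_le_sum_abs _ _
      _ ≤ ∑ i, ρ i * ((ε + β) * |c i|) := by
          refine Finset.sum_le_sum fun i _ => ?_
          rw [abs_mul, abs_mul, abs_of_nonneg (hρ0 i), mul_assoc]
          refine mul_le_mul_of_nonneg_left (mul_le_mul_of_nonneg_right ?_ (abs_nonneg _)) (hρ0 i)
          exact (abs_add_le _ _).trans (add_le_add (hΔ i) (hη i))
      _ = (ε + β) * ∑ i, ρ i * |c i| := by
          rw [Finset.mul_sum]
          exact Finset.sum_congr rfl fun i _ => by ring
      _ ≤ (ε + β) * Real.sqrt (2 * d) := mul_le_mul_of_nonneg_left hCS hεβ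
  calc |Φ.mulVec θhat j - μ j| = |∑ i, ρ i * (Δ i + η i) * c i - Δ j| := by
        rw [hmain, hμj]
        congr 1
        ring
    _ ≤ |∑ i, ρ i * (Δ i + η i) * c i| + |Δ j| := abs_sub _ _
    _ ≤ (ε + β) * Real.sqrt (2 * d) + ε := add_le_add hS (hΔ j)
    _ = ε + (ε + β) * Real.sqrt (2 * d) := by ring
end

section
/- Let Φ ∈ R^{k×d} have rows spanning R^d and let ρ be a probability distribution over the rows with G(ρ) = Σ_a ρ(a) a aᵀ invertible, g(ρ) = max_a ‖a‖²_{G(ρ)^{-1}} ≤ 2d. Suppose μ ∈ Range(Φ) + [-ε,ε]^k, and let θ̂ = G(ρ)^{-1} Σ_a ρ(a) μ_a a and â = argmax over rows a of ⟨a, θ̂⟩. Then μ_â ≥ max over rows a of μ_a − 2ε(1 + √(2d)). -/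
open Matrix Finset

lemma sum_mulVec' {k d : ℕ} (M : Fin k → Matrix (Fin d) (Fin d) ℝ) (v : Fin d → ℝ) :
    (∑ i, M i) *ᵥ v = ∑ i, (M i) *ᵥ v := by
  funext j
  simp only [Matrix.mulVec, dotProduct, Finset.sum_apply, Matrix.sum_apply, Finset.sum_mul]
  exact Finset.sum_comm

lemma dotProduct_sum' {k d : ℕ} (u : Fin d → ℝ) (f : Fin k → Fin d → ℝ) :
    u ⬝ᵥ (∑ i, f i) = ∑ i, u ⬝ᵥ f i := by
  simp only [dotProduct, Finset.sum_apply, Finset.mul_sum]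
  exact Finset.sum_comm

lemma vecMulVec_mulVec' {d : ℕ} (a b u : Fin d → ℝ) :
    (vecMulVec a b) *ᵥ u = (b ⬝ᵥ u) • a := by
  funext i
  simp [vecMulVec_apply, Matrix.mulVec, dotProduct, Finset.mul_sum, mul_comm, mul_left_comm]

/-- Noiseless least-squares over a near-optimal design finds a near-optimal action:
if `μ ∈ Range(Φ) + [-ε,ε]^k`, `g(ρ) ≤ 2d`, `θ̂` is the least-squares estimate and
`â` maximises `⟨a, θ̂⟩` over the rows, then `μ_â ≥ max_a μ_a − 2ε(1 + √(2d))`. -/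
theorem stmt3 (k d : ℕ) (ε : ℝ) (Φ : Matrix (Fin k) (Fin d) ℝ)
    (hspan : Submodule.span ℝ (Set.range fun i => Φ i) = ⊤)
    (ρ : Fin k → ℝ) (hρ0 : ∀ i, 0 ≤ ρ i) (hρ1 : ∑ i, ρ i = 1)
    (G : Matrix (Fin d) (Fin d) ℝ)
    (hG : G = ∑ i, ρ i • vecMulVec (Φ i) (Φ i))
    (hGinv : IsUnit G.det)
    (hg : ∀ i, Φ i ⬝ᵥ G⁻¹.mulVec (Φ i) ≤ 2 * d)
    (μ : Fin k → ℝ) (θ : Fin d → ℝ) (Δ : Fin k → ℝ)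
    (hμ : μ = Φ.mulVec θ + Δ) (hΔ : ∀ j, |Δ j| ≤ ε)
    (θhat : Fin d → ℝ)
    (hθhat : θhat = G⁻¹.mulVec (∑ i, (ρ i * μ i) • Φ i))
    (ahat : Fin k) (hahat : ∀ i, Φ i ⬝ᵥ θhat ≤ Φ ahat ⬝ᵥ θhat) :
    ∀ i, μ i - 2 * ε * (1 + Real.sqrt (2 * d)) ≤ μ ahat := by
  have hε0 : 0 ≤ ε := le_trans (abs_nonneg _) (hΔ ahat)
  set s : ℝ := Real.sqrt (2 * d) with hs
  have hs0 : 0 ≤ s := Real.sqrt_nonneg _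
  set A : Matrix (Fin d) (Fin d) ℝ := G⁻¹ with hA
  have hGA : G * A = 1 := Matrix.mul_nonsing_inv G hGinv
  have hAG : A * G = 1 := Matrix.nonsing_inv_mul G hGinv
  have hGsym : Gᵀ = G := by
    rw [hG]
    ext i j
    simp [Matrix.transpose_apply, Matrix.sum_apply, vecMulVec_apply, mul_comm]
  have hAsym : Aᵀ = A := by
    rw [hA, Matrix.transpose_nonsing_inv, hGsym]
  -- symmetry of the quadratic form
  have hx : ∀ (v : Fin d → ℝ) (w : Fin d → ℝ), v ⬝ᵥ A *ᵥ w = (A *ᵥ v) ⬝ᵥ w := by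
    intro v w
    rw [Matrix.dotProduct_mulVec]
    conv_lhs => rw [← hAsym]
    rw [Matrix.vecMul_transpose]
  -- bilinear expansion of G
  have Gbil : ∀ (u w : Fin d → ℝ), u ⬝ᵥ G *ᵥ w = ∑ l, ρ l * ((u ⬝ᵥ Φ l) * (Φ l ⬝ᵥ w)) := by
    intro u w
    rw [hG, sum_mulVec', dotProduct_sum']
    congr 1
    funext l
    rw [Matrix.smul_mulVec, vecMulVec_mulVec', dotProduct_smul, dotProduct_smul]
    simp [dotProduct_comm, mul_comm, mul_left_comm]
  have hGAv : ∀ v : Fin d → ℝ, G *ᵥ (A *ᵥ v) = v := by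
    intro v
    rw [Matrix.mulVec_mulVec, hGA, Matrix.one_mulVec]
  -- key identity: weighted second moment of x j l
  have hquad : ∀ j, ∑ l, ρ l * ((A *ᵥ Φ j) ⬝ᵥ Φ l) ^ 2 = Φ j ⬝ᵥ A *ᵥ Φ j := by
    intro j
    have h1 : (A *ᵥ Φ j) ⬝ᵥ G *ᵥ (A *ᵥ Φ j)
        = ∑ l, ρ l * (((A *ᵥ Φ j) ⬝ᵥ Φ l) * (Φ l ⬝ᵥ (A *ᵥ Φ j))) := Gbil _ _
    rw [hGAv] at h1
    rw [hx]
    rw [h1]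
    congr 1
    funext l
    rw [dotProduct_comm (Φ l)]
    ring
  have hnn : ∀ j, 0 ≤ Φ j ⬝ᵥ A *ᵥ Φ j := by
    intro j
    rw [← hquad j]
    exact Finset.sum_nonneg fun l _ => mul_nonneg (hρ0 l) (sq_nonneg _)
  -- Cauchy–Schwarz bound
  have hCS : ∀ j, ∑ l, ρ l * |(A *ᵥ Φ j) ⬝ᵥ Φ l| ≤ s := by
    intro j
    apply Real.le_sqrt_of_sq_le
    have := Finset.sum_mul_sq_le_sq_mul_sq Finset.univ
      (fun l => Real.sqrt (ρ l)) (fun l => Real.sqrt (ρ l) * |(A *ᵥ Φ j) ⬝ᵥ Φ l|)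
    have e1 : ∀ l : Fin k, Real.sqrt (ρ l) * (Real.sqrt (ρ l) * |(A *ᵥ Φ j) ⬝ᵥ Φ l|)
        = ρ l * |(A *ᵥ Φ j) ⬝ᵥ Φ l| := by
      intro l
      rw [← mul_assoc, Real.mul_self_sqrt (hρ0 l)]
    have e2 : ∀ l : Fin k, Real.sqrt (ρ l) ^ 2 = ρ l := fun l => Real.sq_sqrt (hρ0 l)
    have e3 : ∀ l : Fin k, (Real.sqrt (ρ l) * |(A *ᵥ Φ j) ⬝ᵥ Φ l|) ^ 2
        = ρ l * ((A *ᵥ Φ j) ⬝ᵥ Φ l) ^ 2 := by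
      intro l
      rw [mul_pow, e2, sq_abs]
    simp only [e1, e2, e3] at this
    rw [hρ1, one_mul, hquad j] at this
    calc (∑ l, ρ l * |(A *ᵥ Φ j) ⬝ᵥ Φ l|) ^ 2 ≤ Φ j ⬝ᵥ A *ᵥ Φ j := this
      _ ≤ 2 * d := hg j
  -- estimation error bound
  have hEst : ∀ j, |Φ j ⬝ᵥ θhat - μ j| ≤ ε * (1 + s) := by
    intro j
    have hexp : Φ j ⬝ᵥ θhat = ∑ l, (ρ l * μ l) * ((A *ᵥ Φ j) ⬝ᵥ Φ l) := by
      rw [hθhat, hx]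
      rw [dotProduct_sum']
      congr 1
      funext l
      rw [dotProduct_smul]
      simp [mul_comm]
    have hμl : ∀ l, μ l = Φ l ⬝ᵥ θ + Δ l := by
      intro l; rw [hμ]; simp [Matrix.mulVec, dotProduct]
    have hmain : ∑ l, (ρ l * (Φ l ⬝ᵥ θ)) * ((A *ᵥ Φ j) ⬝ᵥ Φ l) = Φ j ⬝ᵥ θ := by
      have h1 : (A *ᵥ Φ j) ⬝ᵥ G *ᵥ θ
          = ∑ l, ρ l * (((A *ᵥ Φ j) ⬝ᵥ Φ l) * (Φ l ⬝ᵥ θ)) := Gbil _ _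
      have h2 : (A *ᵥ Φ j) ⬝ᵥ G *ᵥ θ = Φ j ⬝ᵥ θ := by
        rw [Matrix.dotProduct_mulVec, ← hGsym, Matrix.vecMul_transpose, hGAv]
      rw [← h2, h1]
      congr 1
      funext l
      ring
    have hsplit : Φ j ⬝ᵥ θhat - μ j
        = (∑ l, (ρ l * Δ l) * ((A *ᵥ Φ j) ⬝ᵥ Φ l)) - Δ j := by
      rw [hexp, hμl j]
      have : ∑ l, (ρ l * μ l) * ((A *ᵥ Φ j) ⬝ᵥ Φ l)
          = (∑ l, (ρ l * (Φ l ⬝ᵥ θ)) * ((A *ᵥ Φ j) ⬝ᵥ Φ l))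
            + ∑ l, (ρ l * Δ l) * ((A *ᵥ Φ j) ⬝ᵥ Φ l) := by
        rw [← Finset.sum_add_distrib]
        congr 1
        funext l
        rw [hμl l]
        ring
      rw [this, hmain]
      ring
    have hT : |∑ l, (ρ l * Δ l) * ((A *ᵥ Φ j) ⬝ᵥ Φ l)| ≤ ε * s := by
      calc |∑ l, (ρ l * Δ l) * ((A *ᵥ Φ j) ⬝ᵥ Φ l)|
          ≤ ∑ l, |(ρ l * Δ l) * ((A *ᵥ Φ j) ⬝ᵥ Φ l)| := Finset.abs_sum_le_sum_abs _ _
        _ ≤ ∑ l, ε * (ρ l * |(A *ᵥ Φ j) ⬝ᵥ Φ l|) := by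
            apply Finset.sum_le_sum
            intro l _
            rw [abs_mul, abs_mul, abs_of_nonneg (hρ0 l)]
            calc ρ l * |Δ l| * |(A *ᵥ Φ j) ⬝ᵥ Φ l|
                ≤ ρ l * ε * |(A *ᵥ Φ j) ⬝ᵥ Φ l| := by
                  apply mul_le_mul_of_nonneg_right _ (abs_nonneg _)
                  exact mul_le_mul_of_nonneg_left (hΔ l) (hρ0 l)
              _ = ε * (ρ l * |(A *ᵥ Φ j) ⬝ᵥ Φ l|) := by ring
        _ = ε * ∑ l, ρ l * |(A *ᵥ Φ j) ⬝ᵥ Φ l| := by rw [Finset.mul_sum]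
        _ ≤ ε * s := mul_le_mul_of_nonneg_left (hCS j) hε0
    rw [hsplit]
    calc |(∑ l, (ρ l * Δ l) * ((A *ᵥ Φ j) ⬝ᵥ Φ l)) - Δ j|
        ≤ |∑ l, (ρ l * Δ l) * ((A *ᵥ Φ j) ⬝ᵥ Φ l)| + |Δ j| := abs_sub _ _
      _ ≤ ε * s + ε := add_le_add hT (hΔ j)
      _ = ε * (1 + s) := by ring
  intro i
  have h1 := hEst i
  have h2 := hEst ahat
  have h3 := hahat i
  rw [abs_le] at h1 h2
  linarith [h1.1, h1.2, h2.1, h2.2]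
end

section
/- Let γ ∈ (0,1), Q, Q* : S×A → R with π the greedy policy with respect to Q (π(s) ∈ argmax_a Q(s,a)) and π* greedy with respect to the optimal action-value function Q* in a discounted MDP. Then for every state s, V^π(s) ≥ V*(s) − (2/(1−γ))·‖Q − Q*‖∞. -/
open Finset

/-- Singh–Yee bound: if `π` is greedy with respect to `Q` and `‖Q − Q*‖∞ ≤ c`, then
for every state `s`, `V^π(s) ≥ V*(s) − 2c/(1−γ)`. The value functions are
characterised by their Bellman equations in a finite discounted MDP with
stochastic transition kernel `P`. -/
theorem stmt10 {S A : Type*} [Fintype S] [Fintype A] [Nonempty A]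
    (γ : ℝ) (hγ : γ ∈ Set.Ioo (0 : ℝ) 1)
    (P : S → A → S → ℝ) (hP0 : ∀ s a s', 0 ≤ P s a s')
    (hP1 : ∀ s a, ∑ s', P s a s' = 1)
    (r : S → A → ℝ)
    (Qstar : S → A → ℝ) (Vstar : S → ℝ) (hQstar : ∀ s a, Qstar s a = r s a + γ * ∑ s', P s a s' * Vstar s')
    (hVstar : ∀ s : S, Vstar s = Finset.univ.sup' Finset.univ_nonempty (Qstar s))
    (Q : S → A → ℝ) (π : S → A) (hgreedy : ∀ s a, Q s a ≤ Q s (π s))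
    (Vπ : S → ℝ) (hVπ : ∀ s, Vπ s = r s (π s) + γ * ∑ s', P s (π s) s' * Vπ s')
    (c : ℝ) (hc : ∀ s a, |Q s a - Qstar s a| ≤ c) :
    ∀ s, Vstar s - 2 / (1 - γ) * c ≤ Vπ s := by
  obtain ⟨hγ0, hγ1⟩ := hγ
  have h1γ : (0:ℝ) < 1 - γ := by linarith
  intro s0
  have hSne : Nonempty S := ⟨s0⟩
  have hune : (Finset.univ : Finset S).Nonempty := Finset.univ_nonempty
  set D : ℝ := Finset.univ.sup' hune (fun s => Vstar s - Vπ s) with hD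
  -- key step: for every s, Vstar s - Vπ s ≤ 2*c + γ*D
  have key : ∀ s, Vstar s - Vπ s ≤ 2 * c + γ * D := by
    intro s
    have h1 : Vstar s ≤ Qstar s (π s) + 2 * c := by
      rw [hVstar s]
      apply Finset.sup'_le
      intro a _
      have h2 := hc s a
      have h3 := hc s (π s)
      have h4 := hgreedy s a
      have := abs_le.1 h2
      have := abs_le.1 h3
      linarith [this.1, this.2, (abs_le.1 h2).1, (abs_le.1 h2).2]
    have h2 : Qstar s (π s) - Vπ s ≤ γ * D := by
      rw [hQstar s (π s), hVπ s]
      have hsum : ∑ s', P s (π s) s' * Vstar s' - ∑ s', P s (π s) s' * Vπ s'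
          ≤ D := by
        rw [← Finset.sum_sub_distrib]
        calc ∑ s', (P s (π s) s' * Vstar s' - P s (π s) s' * Vπ s')
            = ∑ s', P s (π s) s' * (Vstar s' - Vπ s') := by
              congr 1; ext s'; ring
          _ ≤ ∑ s', P s (π s) s' * D := by
              apply Finset.sum_le_sum
              intro s' _
              exact mul_le_mul_of_nonneg_left
                (Finset.le_sup' (fun t => Vstar t - Vπ t) (Finset.mem_univ s'))
                (hP0 s (π s) s')
          _ = D := by rw [← Finset.sum_mul, hP1 s (π s), one_mul]
      nlinarith [hsum, hγ0.le]
    linarith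
  have hDle : D ≤ 2 * c + γ * D := by
    rw [hD]
    apply Finset.sup'_le
    intro s _
    exact key s
  have hDbound : D ≤ 2 / (1 - γ) * c := by
    rw [div_mul_eq_mul_div, le_div_iff₀ h1γ]
    nlinarith
  have := Finset.le_sup' (fun t => Vstar t - Vπ t) (Finset.mem_univ s0)
  linarith [this.trans hDbound]
end

section
/- Let x_1,...,x_n ∈ R^d with ‖x_s‖₂ ≤ 1, G_t = I + Σ_{s=1}^t x_s x_sᵀ. Then for each t, Σ_{s=1}^{t-1} (x_tᵀ G_{t-1}^{-1} x_s)² ≤ x_tᵀ G_{t-1}^{-1} x_t, and consequently Σ_{t=1}^n Σ_{s=1}^{t-1} |x_tᵀ G_{t-1}^{-1} x_s| ≤ n √(Σ_{t=1}^n x_tᵀ G_{t-1}^{-1} x_t). -/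
open Matrix Finset

lemma aux_vecMulVec_mulVec {d : ℕ} (u v y : Fin d → ℝ) :
    (vecMulVec u v) *ᵥ y = (v ⬝ᵥ y) • u := by
  funext i
  simp only [Matrix.mulVec, Matrix.vecMulVec_apply, dotProduct, Pi.smul_apply, smul_eq_mul,
    Finset.sum_mul]
  exact Finset.sum_congr rfl fun j _ => by ring

lemma aux_psd {d : ℕ} (u : Fin d → ℝ) : (vecMulVec u u).PosSemidef := by
  rw [Matrix.posSemidef_iff_dotProduct_mulVec]
  constructor
  · ext i j
    simp [Matrix.vecMulVec_apply, mul_comm]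
  · intro z
    rw [aux_vecMulVec_mulVec]
    simp only [star_trivial, dotProduct_smul, smul_eq_mul]
    rw [dotProduct_comm]
    exact mul_self_nonneg _

lemma aux_sum_mulVec {d : ℕ} {ι : Type*} (F : Finset ι) (M : ι → Matrix (Fin d) (Fin d) ℝ)
    (y : Fin d → ℝ) : (∑ s ∈ F, M s) *ᵥ y = ∑ s ∈ F, (M s) *ᵥ y := by
  induction F using Finset.cons_induction with
  | empty => simp [Matrix.zero_mulVec]
  | cons a F h ih => simp [Matrix.add_mulVec, ih]

lemma aux_dot_sum {d : ℕ} {ι : Type*} (F : Finset ι) (v : ι → (Fin d → ℝ)) (y : Fin d → ℝ) :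
    y ⬝ᵥ (∑ s ∈ F, v s) = ∑ s ∈ F, y ⬝ᵥ v s := by
  induction F using Finset.cons_induction with
  | empty => simp
  | cons a F h ih => simp [dotProduct_add, ih]

lemma aux_posdef {d : ℕ} (x : ℕ → (Fin d → ℝ)) (t : ℕ) :
    (1 + ∑ s ∈ Finset.range t, vecMulVec (x s) (x s) : Matrix (Fin d) (Fin d) ℝ).PosDef := by
  apply Matrix.PosDef.add_posSemidef Matrix.PosDef.one
  exact Finset.sum_induction _ _ (fun a b ha hb => ha.add hb) Matrix.PosSemidef.zero
    (fun s _ => aux_psd (x s))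

lemma aux_main {d : ℕ} (x : ℕ → (Fin d → ℝ)) (G : Matrix (Fin d) (Fin d) ℝ) (t : ℕ)
    (hG : G = 1 + ∑ s ∈ Finset.range t, vecMulVec (x s) (x s)) :
    ∑ s ∈ Finset.range t, (x t ⬝ᵥ G⁻¹.mulVec (x s)) ^ 2 ≤ x t ⬝ᵥ G⁻¹.mulVec (x t) := by
  have hpd : G.PosDef := hG ▸ aux_posdef x t
  have hinv := hpd.isUnit.invertible
  have hGT : Gᵀ = G := by
    rw [hG]
    simp only [Matrix.transpose_add, Matrix.transpose_one, Matrix.transpose_sum]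
    congr 1
    refine Finset.sum_congr rfl fun s _ => ?_
    ext i j
    simp [Matrix.vecMulVec_apply, mul_comm]
  set y := G⁻¹ *ᵥ x t with hy
  have key : ∀ v : Fin d → ℝ, x t ⬝ᵥ G⁻¹ *ᵥ v = y ⬝ᵥ v := by
    intro v
    rw [Matrix.dotProduct_mulVec, ← Matrix.mulVec_transpose, Matrix.transpose_nonsing_inv, hGT]
  have hterm : ∀ s, (x t ⬝ᵥ G⁻¹ *ᵥ x s) ^ 2 = y ⬝ᵥ (vecMulVec (x s) (x s)) *ᵥ y := by
    intro s
    rw [key, aux_vecMulVec_mulVec, dotProduct_smul, smul_eq_mul, dotProduct_comm, sq]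
  have hyy : (0:ℝ) ≤ y ⬝ᵥ y := Finset.sum_nonneg fun i _ => mul_self_nonneg (y i)
  calc ∑ s ∈ Finset.range t, (x t ⬝ᵥ G⁻¹ *ᵥ x s) ^ 2
      = y ⬝ᵥ (∑ s ∈ Finset.range t, vecMulVec (x s) (x s)) *ᵥ y := by
        rw [aux_sum_mulVec, aux_dot_sum]
        exact Finset.sum_congr rfl fun s _ => hterm s
    _ = y ⬝ᵥ G *ᵥ y - y ⬝ᵥ y := by
        rw [hG, Matrix.add_mulVec, dotProduct_add, Matrix.one_mulVec]; ring
    _ ≤ y ⬝ᵥ G *ᵥ y := by linarith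
    _ = x t ⬝ᵥ y := by
        rw [hy, Matrix.mulVec_mulVec, Matrix.mul_inv_of_invertible, Matrix.one_mulVec,
          dotProduct_comm]

lemma aux_nonneg {d : ℕ} (x : ℕ → (Fin d → ℝ)) (G : Matrix (Fin d) (Fin d) ℝ) (t : ℕ)
    (hG : G = 1 + ∑ s ∈ Finset.range t, vecMulVec (x s) (x s)) :
    0 ≤ x t ⬝ᵥ G⁻¹.mulVec (x t) := by
  have hpd : G.PosDef := hG ▸ aux_posdef x t
  have := hpd.inv.posSemidef.dotProduct_mulVec_nonneg (x t)
  simpa using this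

/-- Elliptical potential style bounds: with `G_t = I + ∑_{s<t} x_s x_sᵀ`, for each
`t`, `∑_{s<t} (x_tᵀ G_t⁻¹ x_s)² ≤ x_tᵀ G_t⁻¹ x_t`, and consequently
`∑_{t<n} ∑_{s<t} |x_tᵀ G_t⁻¹ x_s| ≤ n √(∑_{t<n} x_tᵀ G_t⁻¹ x_t)`. -/
theorem stmt15 (d n : ℕ) (x : ℕ → (Fin d → ℝ)) (hx : ∀ s, x s ⬝ᵥ x s ≤ 1)
    (G : ℕ → Matrix (Fin d) (Fin d) ℝ)
    (hG : ∀ t, G t = 1 + ∑ s ∈ Finset.range t, vecMulVec (x s) (x s)) :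
    (∀ t, ∑ s ∈ Finset.range t, (x t ⬝ᵥ (G t)⁻¹.mulVec (x s)) ^ 2
        ≤ x t ⬝ᵥ (G t)⁻¹.mulVec (x t)) ∧
    (∑ t ∈ Finset.range n, ∑ s ∈ Finset.range t, |x t ⬝ᵥ (G t)⁻¹.mulVec (x s)|)
      ≤ n * Real.sqrt (∑ t ∈ Finset.range n, x t ⬝ᵥ (G t)⁻¹.mulVec (x t)) := by
  refine ⟨fun t => aux_main x (G t) t (hG t), ?_⟩
  set c : ℕ → ℝ := fun t => x t ⬝ᵥ (G t)⁻¹.mulVec (x t) with hc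
  have hcn : ∀ t, 0 ≤ c t := fun t => aux_nonneg x (G t) t (hG t)
  have hcsum : (0:ℝ) ≤ ∑ t ∈ Finset.range n, c t := Finset.sum_nonneg fun t _ => hcn t
  -- step 1: inner bound
  have step1 : ∀ t ∈ Finset.range n,
      ∑ s ∈ Finset.range t, |x t ⬝ᵥ (G t)⁻¹.mulVec (x s)|
        ≤ Real.sqrt n * Real.sqrt (c t) := by
    intro t ht
    have htn : (t:ℝ) ≤ n := by exact_mod_cast (Finset.mem_range.mp ht).le
    have habs : (0:ℝ) ≤ ∑ s ∈ Finset.range t, |x t ⬝ᵥ (G t)⁻¹.mulVec (x s)| :=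
      Finset.sum_nonneg fun s _ => abs_nonneg _
    have hcs := Finset.sum_mul_sq_le_sq_mul_sq (Finset.range t)
      (fun s => |x t ⬝ᵥ (G t)⁻¹.mulVec (x s)|) (fun _ => (1:ℝ))
    simp only [mul_one, one_pow, Finset.sum_const, Finset.card_range, nsmul_eq_mul,
      sq_abs] at hcs
    have hsq : (∑ s ∈ Finset.range t, |x t ⬝ᵥ (G t)⁻¹.mulVec (x s)|) ^ 2
        ≤ (n:ℝ) * c t := by
      calc (∑ s ∈ Finset.range t, |x t ⬝ᵥ (G t)⁻¹.mulVec (x s)|) ^ 2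
          ≤ (∑ s ∈ Finset.range t, (x t ⬝ᵥ (G t)⁻¹.mulVec (x s)) ^ 2) * t := hcs
        _ ≤ c t * n := by
            apply mul_le_mul (aux_main x (G t) t (hG t)) htn (Nat.cast_nonneg t) (hcn t)
        _ = (n:ℝ) * c t := mul_comm _ _
    calc ∑ s ∈ Finset.range t, |x t ⬝ᵥ (G t)⁻¹.mulVec (x s)|
        = Real.sqrt ((∑ s ∈ Finset.range t, |x t ⬝ᵥ (G t)⁻¹.mulVec (x s)|) ^ 2) :=
          (Real.sqrt_sq habs).symm
      _ ≤ Real.sqrt ((n:ℝ) * c t) := Real.sqrt_le_sqrt hsq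
      _ = Real.sqrt n * Real.sqrt (c t) := Real.sqrt_mul (Nat.cast_nonneg n) _
  have step2 : ∑ t ∈ Finset.range n, Real.sqrt (c t)
      ≤ Real.sqrt n * Real.sqrt (∑ t ∈ Finset.range n, c t) := by
    have hcs := Finset.sum_mul_sq_le_sq_mul_sq (Finset.range n)
      (fun t => Real.sqrt (c t)) (fun _ => (1:ℝ))
    simp only [mul_one, one_pow, Finset.sum_const, Finset.card_range, nsmul_eq_mul] at hcs
    rw [Finset.sum_congr rfl (fun t _ => Real.sq_sqrt (hcn t))] at hcs
    have hnn : (0:ℝ) ≤ ∑ t ∈ Finset.range n, Real.sqrt (c t) :=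
      Finset.sum_nonneg fun t _ => Real.sqrt_nonneg _
    calc ∑ t ∈ Finset.range n, Real.sqrt (c t)
        = Real.sqrt ((∑ t ∈ Finset.range n, Real.sqrt (c t)) ^ 2) := (Real.sqrt_sq hnn).symm
      _ ≤ Real.sqrt ((∑ t ∈ Finset.range n, c t) * n) := Real.sqrt_le_sqrt hcs
      _ = Real.sqrt n * Real.sqrt (∑ t ∈ Finset.range n, c t) := by
          rw [Real.sqrt_mul hcsum, mul_comm]
  calc ∑ t ∈ Finset.range n, ∑ s ∈ Finset.range t, |x t ⬝ᵥ (G t)⁻¹.mulVec (x s)|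
      ≤ ∑ t ∈ Finset.range n, Real.sqrt n * Real.sqrt (c t) := Finset.sum_le_sum step1
    _ = Real.sqrt n * ∑ t ∈ Finset.range n, Real.sqrt (c t) := (Finset.mul_sum _ _ _).symm
    _ ≤ Real.sqrt n * (Real.sqrt n * Real.sqrt (∑ t ∈ Finset.range n, c t)) :=
        mul_le_mul_of_nonneg_left step2 (Real.sqrt_nonneg _)
    _ = n * Real.sqrt (∑ t ∈ Finset.range n, c t) := by
        rw [← mul_assoc, Real.mul_self_sqrt (Nat.cast_nonneg n)]
end
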